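/- arXiv:0710.4499 — 3 statements merged into one kernel-verified Lean document; each statement's English description precedes it below -/
import Mathlib

section
/- For any two distinct bitstrings x and y with |x| ≤ |y| and y ending in 1, the string x · 0^|y| · reverse(y) is not a palindrome, while y · 0^|y| · reverse(y) is a palindrome. -/
theorem stmt_0 (x y : List Bool) (hne : x ≠ y) (hlen : x.length ≤ y.length)
    (hlast : y.getLast? = some true) :
    (x ++ List.replicate y.length false ++ y.reverse).reverse ≠
      (x ++ List.replicate y.length false ++ y.reverse) ∧
    (y ++ List.replicate y.length false ++ y.reverse).reverse =
      (y ++ List.replicate y.length false ++ y.reverse) := by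
  constructor
  · intro h
    rw [List.reverse_append, List.reverse_append, List.reverse_reverse,
      List.reverse_replicate] at h
    -- h : y ++ (replicate n false ++ x.reverse) = x ++ replicate n false ++ y.reverse
    have htake := congrArg (List.take y.length) h
    rw [List.append_assoc, List.take_append,
      List.take_append (l₁ := x), List.take_of_length_le le_rfl,
      Nat.sub_self, List.take_zero, List.append_nil,
      List.take_of_length_le hlen, List.take_append,
      List.take_replicate, Nat.min_eq_left (Nat.sub_le _ _)] at htake
    rw [List.length_replicate, Nat.sub_eq_zero_of_le (Nat.sub_le _ _),
      List.take_zero, List.append_nil] at htake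
    -- htake : y = x ++ replicate (y.length - x.length) false
    rcases Nat.eq_or_lt_of_le hlen with heq | hlt
    · rw [heq, Nat.sub_self, List.replicate_zero, List.append_nil] at htake
      exact hne htake.symm
    · have : y.getLast? = some false := by
        rw [htake, List.getLast?_append_of_ne_nil]
        · rw [List.getLast?_replicate]
          simp [Nat.sub_ne_zero_of_lt hlt]
        · simp [Nat.sub_ne_zero_of_lt hlt]
      rw [this] at hlast
      simp at hlast
  · rw [List.reverse_append, List.reverse_append, List.reverse_reverse,
      List.reverse_replicate, List.append_assoc]
end

section
/- The linguistic congruence of the language PAL of bitstring palindromes is the identity relation: for all bitstrings x and y, (∀ u v, u·x·v ∈ PAL ↔ u·y·v ∈ PAL) if and only if x = y. -/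
lemma pal_aux (x t : List Bool) (ht : t.reverse = t)
    (H : ∀ u v : List Bool,
        ((u ++ x ++ v).reverse = u ++ x ++ v ↔
          (u ++ (t ++ x) ++ v).reverse = u ++ (t ++ x) ++ v)) :
    t = [] := by
  cases t with
  | nil => rfl
  | cons a t0 =>
    exfalso
    have h1 := (H (x.reverse ++ [!a]) []).mp (by simp)
    have ht' : t0.reverse ++ [a] = a :: t0 := by simpa using ht
    simp [List.reverse_append, ht', List.append_assoc] at h1

theorem stmt_1 (x y : List Bool) :
    (∀ u v : List Bool,
        ((u ++ x ++ v).reverse = u ++ x ++ v ↔ (u ++ y ++ v).reverse = u ++ y ++ v))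
      ↔ x = y := by
  constructor
  · intro H
    have h0 := (H x.reverse []).mp (by simp)
    simp [List.reverse_append] at h0
    -- h0 : y.reverse ++ x = x.reverse ++ y
    rcases List.append_eq_append_iff.mp h0 with ⟨t, h1, h2⟩ | ⟨t, h1, h2⟩
    · -- h1 : x.reverse = y.reverse ++ t, h2 : x = t ++ y  (or similar)
      have ht : t.reverse = t := by
        have := congrArg List.reverse h1
        simp [h2, List.reverse_append] at this ⊢
        exact this.symm
      have : t = [] := pal_aux y t ht (fun u v => by
        rw [← h2]; exact (H u v).symm)
      subst this
      simp [h2]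
    · have ht : t.reverse = t := by
        have := congrArg List.reverse h1
        simp [h2, List.reverse_append] at this ⊢
        exact this.symm
      have : t = [] := pal_aux x t ht (fun u v => by
        rw [← h2]; exact H u v)
      subst this
      simp [h2]
  · rintro rfl
    exact fun u v => Iff.rfl
end

section
/- Let t, v, u, v' be strings with |v| = |v'|, suppose t·v·u is obtained from (wwᴿ)^{2i+1} by the factorization where v contains exactly the j-th block wwᴿ (j ≤ i, i.e., the block lies in the left half strictly before the middle block i+1), and v' differs from v exactly by replacing that block with w'w'ᴿ where w' ≠ w, |w'| = |w|. Then t·v'·u is not a palindrome. -/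
theorem stmt_15 (w w' : List Bool) (m i j : ℕ)
    (hw : w.length = m) (hw' : w'.length = m) (hm : 1 ≤ m) (hne : w ≠ w')
    (hj1 : 1 ≤ j) (hji : j ≤ i)
    (t u : List Bool)
    (ht : t = (List.replicate (j - 1) (w ++ w.reverse)).flatten)
    (hu : u = (List.replicate (2 * i + 1 - j) (w ++ w.reverse)).flatten) :
    (t ++ (w' ++ w'.reverse) ++ u).reverse ≠ t ++ (w' ++ w'.reverse) ++ u := by
  intro h
  apply hne
  set p := w ++ w.reverse with hp
  set p' := w' ++ w'.reverse with hp'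
  have hpl : p.length = 2 * m := by simp [hp, hw]; ring
  have hp'l : p'.length = 2 * m := by simp [hp', hw']; ring
  have hflrev : ∀ n : ℕ, ((List.replicate n p).flatten).reverse
      = (List.replicate n p).flatten := by
    intro n
    rw [List.reverse_flatten, List.map_replicate, List.reverse_replicate]
    simp [hp]
  have hpow : ∀ a b : ℕ, (List.replicate (a + b) p).flatten
      = (List.replicate a p).flatten ++ (List.replicate b p).flatten := by
    intro a b
    rw [List.replicate_add, List.flatten_append]
  -- rewrite the reverse
  have h2 : (List.replicate (2 * i + 1 - j) p).flatten ++ (p' ++ (List.replicate (j - 1) p).flatten)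
      = (List.replicate (j - 1) p).flatten ++ (p' ++ (List.replicate (2 * i + 1 - j) p).flatten) := by
    have := h
    rw [ht, hu] at this
    rw [List.reverse_append, List.reverse_append, hflrev, hflrev] at this
    have hp'rev : p'.reverse = p' := by simp [hp']
    rw [hp'rev] at this
    simpa [List.append_assoc] using this
  -- arithmetic: 2*i+1-j = (j-1) + (2*(i-j)+2)
  have harith : 2 * i + 1 - j = (j - 1) + (2 * (i - j) + 2) := by omega
  rw [harith, hpow, List.append_assoc] at h2
  have h3 : (List.replicate (2 * (i - j) + 2) p).flatten ++ (p' ++ (List.replicate (j - 1) p).flatten)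
      = p' ++ ((List.replicate (j - 1) p).flatten ++ (List.replicate (2 * (i - j) + 2) p).flatten) := by
    have := List.append_cancel_left h2
    rw [← hpow, ← harith] at this ⊢
    rw [harith, hpow] at this ⊢
    simpa [List.append_assoc] using this
  rw [List.replicate_succ, List.flatten_cons, List.append_assoc] at h3
  have hpp' : p = p' := by
    have := List.append_inj_left h3 (by rw [hpl, hp'l])
    exact this
  exact List.append_inj_left hpp' (by rw [hw, hw'])
end
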